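/- Let {Λ_j}_{j∈J} be a Parseval g-frame for H (i.e., Σ_j ‖Λ_j f‖² = ‖f‖² for all f). For I ⊆ J set S_I f = Σ_{j∈I} Λ_j* Λ_j f. Then for all f ∈ H: Σ_{j∈I} ‖Λ_j f‖² − ‖S_I f‖² = Σ_{j∈Iᶜ} ‖Λ_j f‖² − ‖S_{Iᶜ} f‖². -/

import Mathlib

/-!
Since `⟪f, Λ_j* Λ_j f⟫ = ‖Λ_j f‖²`, summing over `J` shows `⟪f, (S_I + S_{Iᶜ}) f⟫ = ‖f‖²` for
every `f`; over `ℂ`, polarization turns this into `S_I + S_{Iᶜ} = 1`. Writing `g = S_I f`, the claim becomes the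
identity `re ⟪f, g⟫ - ‖g‖² = re ⟪f, f - g⟫ - ‖f - g‖²`, valid for any two vectors.
-/

open ContinuousLinearMap RCLike

section

variable {𝕜 E : Type*} [RCLike 𝕜] [NormedAddCommGroup E] [InnerProductSpace 𝕜 E]

theorem re_inner_sub_norm_sq_eq_re_inner_sub_sub_norm_sq (f g : E) :
    re (inner 𝕜 f g) - ‖g‖ ^ 2 = re (inner 𝕜 f (f - g)) - ‖f - g‖ ^ 2 := by
  rw [inner_sub_right, map_sub, @norm_sub_sq 𝕜, inner_self_eq_norm_sq]
  ring

variable [CompleteSpace E] {ι : Type*} {F : ι → Type*} [∀ j, NormedAddCommGroup (F j)]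
  [∀ j, InnerProductSpace 𝕜 (F j)] [∀ j, CompleteSpace (F j)]

theorem hasSum_norm_sq_of_hasSum_adjoint_apply (Λ : ∀ j, E →L[𝕜] F j) {f s : E}
    (h : HasSum (fun j => adjoint (Λ j) (Λ j f)) s) :
    HasSum (fun j => ((‖Λ j f‖ ^ 2 : ℝ) : 𝕜)) (inner 𝕜 f s) := by
  have := (innerSL 𝕜 f).hasSum h
  simpa only [innerSL_apply_apply, adjoint_inner_right, inner_self_eq_norm_sq_to_K,
    ofReal_pow] using this

theorem tsum_norm_sq_eq_re_inner_of_hasSum_adjoint_apply (Λ : ∀ j, E →L[𝕜] F j) {f s : E}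
    (h : HasSum (fun j => adjoint (Λ j) (Λ j f)) s) :
    ∑' j, ‖Λ j f‖ ^ 2 = re (inner 𝕜 f s) := by
  simpa only [ofReal_re] using (hasSum_re 𝕜 (hasSum_norm_sq_of_hasSum_adjoint_apply Λ h)).tsum_eq

end

theorem eq_id_of_parseval_of_hasSum_adjoint_apply {E : Type*} [NormedAddCommGroup E]
    [InnerProductSpace ℂ E] [CompleteSpace E] {ι : Type*} {F : ι → Type*}
    [∀ j, NormedAddCommGroup (F j)] [∀ j, InnerProductSpace ℂ (F j)] [∀ j, CompleteSpace (F j)]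
    (Λ : ∀ j, E →L[ℂ] F j) (hP : ∀ f : E, HasSum (fun j => ‖Λ j f‖ ^ 2) (‖f‖ ^ 2))
    {S : E →L[ℂ] E} (hS : ∀ f : E, HasSum (fun j => adjoint (Λ j) (Λ j f)) (S f)) :
    S = ContinuousLinearMap.id ℂ E := by
  have hinner : ∀ f, inner ℂ f (S f) = inner ℂ f f := fun f => by
    rw [inner_self_eq_norm_sq_to_K]
    exact (hasSum_norm_sq_of_hasSum_adjoint_apply Λ (hS f)).unique
      (by exact_mod_cast Complex.hasSum_ofReal.mpr (hP f))
  refine ContinuousLinearMap.coe_injective ((ext_inner_map _ _).mp fun f => ?_)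
  simp only [coe_coe, coe_id', id_eq]
  rw [← inner_conj_symm, hinner, inner_conj_symm]

theorem stmt6 {H : Type*} [NormedAddCommGroup H] [InnerProductSpace ℂ H] [CompleteSpace H]
    {ι : Type*} {Hs : ι → Type*} [∀ j, NormedAddCommGroup (Hs j)]
    [∀ j, InnerProductSpace ℂ (Hs j)] [∀ j, CompleteSpace (Hs j)]
    (Λ : ∀ j, H →L[ℂ] Hs j)
    (hP : ∀ f : H, HasSum (fun j => ‖Λ j f‖ ^ 2) (‖f‖ ^ 2))
    (I : Set ι) (SI SIc : H →L[ℂ] H)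
    (hSI : ∀ f : H, HasSum (fun j : I => adjoint (Λ j) (Λ j f)) (SI f))
    (hSIc : ∀ f : H, HasSum (fun j : ↥Iᶜ => adjoint (Λ j) (Λ j f)) (SIc f)) :
    ∀ f : H,
      (∑' j : I, ‖Λ j f‖ ^ 2) - ‖SI f‖ ^ 2 = (∑' j : ↥Iᶜ, ‖Λ j f‖ ^ 2) - ‖SIc f‖ ^ 2 := by
  have hsum : SI + SIc = ContinuousLinearMap.id ℂ H :=
    eq_id_of_parseval_of_hasSum_adjoint_apply Λ hP fun f =>
      HasSum.add_compl (f := fun j => adjoint (Λ j) (Λ j f)) (hSI f) (hSIc f)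
  intro f
  have hSIc_f : SIc f = f - SI f := by
    rw [eq_sub_iff_add_eq', ← add_apply, hsum, id_apply]
  rw [tsum_norm_sq_eq_re_inner_of_hasSum_adjoint_apply (fun j : I => Λ j) (hSI f),
    tsum_norm_sq_eq_re_inner_of_hasSum_adjoint_apply (fun j : ↥Iᶜ => Λ j) (hSIc f), hSIc_f]
  exact re_inner_sub_norm_sq_eq_re_inner_sub_sub_norm_sq f (SI f)
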